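/- Let K and K' be two distinct minimal X–Y separators of G. Then NR(G,Y,K) is a proper subset of NR(G,Y,K') if and only if R(G,X,K) is a proper subset of R(G,X,K'). -/

import Mathlib

variable {V : Type*}

/-- `K` is an `X`–`Y` separator of `G`: `K` avoids `X ∪ Y` and every walk
from a vertex of `X` to a vertex of `Y` meets `K` (i.e. there is no
`X`–`Y` path in `G \ K`). -/
def IsSeparator (G : SimpleGraph V) (X Y K : Set V) : Prop :=
  K ⊆ (X ∪ Y)ᶜ ∧
  ∀ x ∈ X, ∀ y ∈ Y, ∀ w : G.Walk x y, ∃ v ∈ w.support, v ∈ K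

/-- `NR G A B`: the vertices of `G \ B` that are not reachable from `A` in `G \ B`. -/
def NR (G : SimpleGraph V) (A B : Set V) : Set V :=
  {v | v ∉ B ∧ ¬ ∃ a ∈ A, ∃ w : G.Walk a v, ∀ x ∈ w.support, x ∉ B}

/-- `Reach G A B`: the vertices reachable from `A` in `G \ B`. -/
def Reach (G : SimpleGraph V) (A B : Set V) : Set V :=
  {v | ∃ a ∈ A, ∃ w : G.Walk a v, ∀ x ∈ w.support, x ∉ B}

/-- The order on `X`–`Y` separators: `K1 ≤ K2` iff `NR(G,Y,K1) ⊆ NR(G,Y,K2)`. -/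
def SepLE (G : SimpleGraph V) (Y K1 K2 : Set V) : Prop :=
  NR G Y K1 ⊆ NR G Y K2

/-- The strict order on `X`–`Y` separators. -/
def SepLT (G : SimpleGraph V) (Y K1 K2 : Set V) : Prop :=
  NR G Y K1 ⊆ NR G Y K2 ∧ NR G Y K1 ≠ NR G Y K2

/-- A minimal `X`–`Y` separator: no proper subset is an `X`–`Y` separator. -/
def IsMinimalSeparator (G : SimpleGraph V) (X Y K : Set V) : Prop :=
  IsSeparator G X Y K ∧ ∀ K' ⊂ K, ¬ IsSeparator G X Y K'

/-- An important `X`–`Y` separator: a minimal separator `K` such that there is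
no separator `K'` with `K < K'` and `|K'| ≤ |K|`. -/
def IsImportantSeparator (G : SimpleGraph V) (X Y K : Set V) : Prop :=
  IsMinimalSeparator G X Y K ∧
  ¬ ∃ K', IsSeparator G X Y K' ∧ SepLT G Y K K' ∧ K'.ncard ≤ K.ncard

/-- The minimum size of an `X`–`Y` separator of `G`. -/
noncomputable def minSepSize (G : SimpleGraph V) (X Y : Set V) : ℕ :=
  sInf {n | ∃ K, IsSeparator G X Y K ∧ K.ncard = n}

/-- The excess of a separator: its size minus the minimum separator size. -/
noncomputable def excess (G : SimpleGraph V) (X Y K : Set V) : ℕ :=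
  K.ncard - minSepSize G X Y

/-- The graph `Pr(G,X,Y,K)`: the vertices `NR(G,Y,K) \ X` are deleted (here:
made isolated), and every vertex of `X` is made adjacent to every vertex of `K`. -/
def PrGraph (G : SimpleGraph V) (X Y K : Set V) : SimpleGraph V where
  Adj u v := u ≠ v ∧ u ∉ NR G Y K \ X ∧ v ∉ NR G Y K \ X ∧
    (G.Adj u v ∨ (u ∈ X ∧ v ∈ K) ∨ (u ∈ K ∧ v ∈ X))
  symm := by
    constructor
    rintro u v ⟨h1, h2, h3, h4⟩
    refine ⟨h1.symm, h3, h2, ?_⟩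
    rcases h4 with h | h | h
    · exact Or.inl h.symm
    · exact Or.inr (Or.inr ⟨h.2, h.1⟩)
    · exact Or.inr (Or.inl ⟨h.2, h.1⟩)
  loopless := by constructor; rintro v ⟨h1, -⟩; exact h1 rfl

/-- `NSet G X` is `N(X)`: the set of vertices outside `X` adjacent to a vertex of `X`. -/
def NSet (G : SimpleGraph V) (X : Set V) : Set V :=
  {v | v ∉ X ∧ ∃ x ∈ X, G.Adj x v}

/-- `G` is `X`–`Y` normalized: `N(X)` is an `X`–`Y` separator and is
the unique smallest `X`–`Y` separator. -/
def Normalized (G : SimpleGraph V) (X Y : Set V) : Prop :=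
  IsSeparator G X Y (NSet G X) ∧
  ∀ K, IsSeparator G X Y K → K ≠ NSet G X → (NSet G X).ncard < K.ncard

/-- The cover excess `CE(S)`: the minimum excess of an `X`–`Y` separator disjoint from `S`. -/
noncomputable def CE (G : SimpleGraph V) (X Y S : Set V) : ℕ :=
  sInf {n | ∃ K, IsSeparator G X Y K ∧ Disjoint K S ∧ excess G X Y K = n}

/-- A witness of `S`: an `X`–`Y` separator disjoint from `S` whose excess equals `CE(S)`. -/
noncomputable def IsWitness (G : SimpleGraph V) (X Y S K : Set V) : Prop :=
  IsSeparator G X Y K ∧ Disjoint K S ∧ excess G X Y K = CE G X Y S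

/-- An important witness of `S`: a witness of `S` that is an important `X`–`Y` separator. -/
noncomputable def IsImportantWitness (G : SimpleGraph V) (X Y S K : Set V) : Prop :=
  IsWitness G X Y S K ∧ IsImportantSeparator G X Y K

/-!
For an `X`–`Y` separator `K` the sets `Reach G X K` and `Reach G Y K` are disjoint, and
`NR G Y K` is the complement of `K ∪ Reach G Y K`. Minimality of `K` means that every vertex
of `K` has a neighbour on both sides. For minimal `K`, `K'` this makes the three inclusions
`NR G Y K ⊆ NR G Y K'`, `Reach G X K ⊆ Reach G X K'` and `Reach G Y K' ⊆ Reach G Y K`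
equivalent; applied in both directions it gives the statement for strict inclusions.
-/

section Separators

variable {G : SimpleGraph V} {A B B' X Y K K' : Set V} {u v : V}

lemma notMem_of_mem_reach (hv : v ∈ Reach G A B) : v ∉ B := by
  obtain ⟨a, -, w, hw⟩ := hv
  exact hw v w.end_mem_support

lemma mem_reach_of_mem (hv : v ∈ A) (hvB : v ∉ B) : v ∈ Reach G A B :=
  ⟨v, hv, .nil, by simpa using hvB⟩

lemma mem_reach_of_adj (hu : u ∈ Reach G A B) (huv : G.Adj u v) (hv : v ∉ B) :
    v ∈ Reach G A B := by
  obtain ⟨a, ha, w, hw⟩ := hu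
  refine ⟨a, ha, w.concat huv, fun x hx => ?_⟩
  rw [SimpleGraph.Walk.support_concat, List.mem_append, List.mem_singleton] at hx
  rcases hx with hx | rfl
  exacts [hw x hx, hv]

lemma mem_reach_of_mem_support {a : V} (ha : a ∈ A) (w : G.Walk a v)
    (hw : ∀ x ∈ w.support, x ∉ B) (hu : u ∈ w.support) : u ∈ Reach G A B := by
  classical
  exact ⟨a, ha, w.takeUntil u hu,
    fun x hx => hw x (w.support_takeUntil_subset_support hu hx)⟩

lemma reach_subset_reach_of_disjoint (h : Disjoint (Reach G A B) B') :
    Reach G A B ⊆ Reach G A B' := by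
  rintro v ⟨a, ha, w, hw⟩
  exact ⟨a, ha, w, fun x hx => h.notMem_of_mem_left (mem_reach_of_mem_support ha w hw hx)⟩

lemma IsSeparator.symm (hK : IsSeparator G X Y K) : IsSeparator G Y X K := by
  refine ⟨Set.union_comm X Y ▸ hK.1, fun y hy x hx w => ?_⟩
  obtain ⟨v, hv, hvK⟩ := hK.2 x hx y hy w.reverse
  rw [SimpleGraph.Walk.support_reverse, List.mem_reverse] at hv
  exact ⟨v, hv, hvK⟩

lemma IsMinimalSeparator.symm (hK : IsMinimalSeparator G X Y K) :
    IsMinimalSeparator G Y X K :=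
  ⟨hK.1.symm, fun K' hK' hsep => hK.2 K' hK' hsep.symm⟩

lemma IsSeparator.disjoint_reach (hK : IsSeparator G X Y K) :
    Disjoint (Reach G X K) (Reach G Y K) := by
  refine Set.disjoint_left.mpr ?_
  rintro v ⟨x, hx, wx, hwx⟩ ⟨y, hy, wy, hwy⟩
  obtain ⟨u, hu, huK⟩ := hK.2 x hx y hy (wx.append wy.reverse)
  rw [SimpleGraph.Walk.mem_support_append_iff, SimpleGraph.Walk.support_reverse,
    List.mem_reverse] at hu
  rcases hu with hu | hu
  exacts [hwx u hu huK, hwy u hu huK]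

lemma IsSeparator.reach_subset_NR (hK : IsSeparator G X Y K) : Reach G X K ⊆ NR G Y K :=
  fun _ hv => ⟨notMem_of_mem_reach hv, hK.disjoint_reach.notMem_of_mem_left hv⟩

/-- Deleting `k` from `K` reconnects `X` to `Y`; the first step of such a walk that leaves
`Reach G X K` must enter `K`, hence enters it at `k`. -/
lemma IsMinimalSeparator.exists_adj_reach_left (hK : IsMinimalSeparator G X Y K) {k : V}
    (hk : k ∈ K) : ∃ u ∈ Reach G X K, G.Adj u k := by
  have hsub : K \ {k} ⊆ (X ∪ Y)ᶜ := fun v hv => hK.1.1 hv.1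
  have hnsep : ¬ ∀ x ∈ X, ∀ y ∈ Y, ∀ w : G.Walk x y, ∃ v ∈ w.support, v ∈ K \ {k} :=
    fun h => hK.2 _ (Set.sdiff_singleton_ssubset.mpr hk) ⟨hsub, h⟩
  push Not at hnsep
  obtain ⟨x, hx, y, hy, w, hw⟩ := hnsep
  have hxK : x ∉ K := fun h => hK.1.1 h (Or.inl hx)
  have hyK : y ∉ K := fun h => hK.1.1 h (Or.inr hy)
  obtain ⟨d, hd, hfst, hsnd⟩ := w.exists_boundary_dart (Reach G X K)
    (mem_reach_of_mem hx hxK)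
    (hK.1.disjoint_reach.notMem_of_mem_right (mem_reach_of_mem hy hyK))
  have hdK : d.snd ∈ K := by_contra fun h => hsnd (mem_reach_of_adj hfst d.adj h)
  have hdk : d.snd = k := by
    by_contra h
    exact hw _ (w.dart_snd_mem_support_of_mem_darts hd) ⟨hdK, h⟩
  exact ⟨d.fst, hfst, hdk ▸ d.adj⟩

lemma IsMinimalSeparator.exists_adj_reach_right (hK : IsMinimalSeparator G X Y K) {k : V}
    (hk : k ∈ K) : ∃ u ∈ Reach G Y K, G.Adj u k :=
  hK.symm.exists_adj_reach_left hk

lemma IsSeparator.reach_subset_of_NR_subset (hK : IsSeparator G X Y K)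
    (h : NR G Y K ⊆ NR G Y K') : Reach G X K ⊆ Reach G X K' :=
  reach_subset_reach_of_disjoint <| Set.disjoint_left.mpr fun _ hv =>
    (h (hK.reach_subset_NR hv)).1

lemma IsMinimalSeparator.reach_right_subset_of_reach_left_subset
    (hK : IsMinimalSeparator G X Y K) (hK' : IsSeparator G X Y K')
    (h : Reach G X K ⊆ Reach G X K') : Reach G Y K' ⊆ Reach G Y K := by
  refine reach_subset_reach_of_disjoint (Set.disjoint_right.mpr fun k hk hkY => ?_)
  obtain ⟨u, hu, huk⟩ := hK.exists_adj_reach_left hk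
  have hkX : k ∈ Reach G X K' := mem_reach_of_adj (h hu) huk (notMem_of_mem_reach hkY)
  exact hK'.disjoint_reach.notMem_of_mem_left hkX hkY

lemma IsMinimalSeparator.NR_subset_of_reach_subset (hK' : IsMinimalSeparator G X Y K')
    (h : Reach G Y K' ⊆ Reach G Y K) : NR G Y K ⊆ NR G Y K' := by
  rintro v ⟨hvK, hvR⟩
  refine ⟨fun hvK' => ?_, fun hvR' => hvR (h hvR')⟩
  obtain ⟨u, hu, huv⟩ := hK'.exists_adj_reach_right hvK'
  exact hvR (mem_reach_of_adj (h hu) huv hvK)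

lemma NR_subset_NR_iff_reach_subset_reach (hK : IsMinimalSeparator G X Y K)
    (hK' : IsMinimalSeparator G X Y K') :
    NR G Y K ⊆ NR G Y K' ↔ Reach G X K ⊆ Reach G X K' :=
  ⟨hK.1.reach_subset_of_NR_subset,
    fun h => hK'.NR_subset_of_reach_subset (hK.reach_right_subset_of_reach_left_subset hK'.1 h)⟩

end Separators

theorem NR_ssubset_iff_Reach_ssubset_general
    {V : Type*} (G : SimpleGraph V) (X Y K K' : Set V)
    (hK : IsMinimalSeparator G X Y K) (hK' : IsMinimalSeparator G X Y K') :
    NR G Y K ⊂ NR G Y K' ↔ Reach G X K ⊂ Reach G X K' := by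
  rw [ssubset_iff_subset_not_subset, ssubset_iff_subset_not_subset,
    NR_subset_NR_iff_reach_subset_reach hK hK', NR_subset_NR_iff_reach_subset_reach hK' hK]

/-- Let `K`, `K'` be two distinct minimal `X`–`Y` separators of `G`.
Then `NR(G,Y,K) ⊂ NR(G,Y,K')` if and only if `R(G,X,K) ⊂ R(G,X,K')`. -/
theorem NR_ssubset_iff_Reach_ssubset
    {V : Type*} [Fintype V] (G : SimpleGraph V) (X Y K K' : Set V)
    (hXY : Disjoint X Y)
    (hK : IsMinimalSeparator G X Y K) (hK' : IsMinimalSeparator G X Y K')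
    (hne : K ≠ K') :
    NR G Y K ⊂ NR G Y K' ↔ Reach G X K ⊂ Reach G X K' :=
  NR_ssubset_iff_Reach_ssubset_general G X Y K K' hK hK'
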